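/- arXiv:1909.04471 — 7 statements merged into one kernel-verified Lean document; each statement's English description precedes it below -/
import Mathlib

section
/- Let n ≥ 1 be an integer and γ ≥ 1 a real number. If f ∈ A_n satisfies |z·f''(z) + (γ−1)·(f'(z) − f(z)/z)| < (n+γ)/2 for all z ∈ 𝔻 \ {0}, then f ∈ Ω_n (i.e., |z·f'(z) − f(z)| < 1/2 for all z ∈ 𝔻). -/
open Complex Metric

/-- The open unit disc in `ℂ`. -/
def unitDisc : Set ℂ := Metric.ball 0 1

/-- `f ∈ 𝒜ₙ`: `f` is analytic on the unit disc with power series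
`f(z) = z + ∑_{k=n+1}^∞ a_k z^k`. -/
def MemA (n : ℕ) (f : ℂ → ℂ) : Prop :=
  DifferentiableOn ℂ f unitDisc ∧
    ∃ a : ℕ → ℂ, ∀ z ∈ unitDisc, f z = z + ∑' k : ℕ, a k * z ^ (n + 1 + k)

/-- `f ∈ Ωₙ`: `f ∈ 𝒜ₙ` and `|z f'(z) - f(z)| < 1/2` on the unit disc. -/
def MemOmega (n : ℕ) (f : ℂ → ℂ) : Prop :=
  MemA n f ∧ ∀ z ∈ unitDisc, ‖z * deriv f z - f z‖ < 1 / 2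

/-! Write `f z = z + z ^ (n + 1) * p z` with `p` holomorphic on the disc (iterated `dslope`).
Then `z f' - f = z ^ (n + 1) * q` with `q = n p + z p'`, and the hypothesis reads
`‖z ^ n * φ z‖ < (n + γ) / 2` with `φ = (n + γ) q + z q'`. The maximum modulus principle on
circles `‖z‖ = r → 1` removes the factor `z ^ n`, so `‖φ‖ ≤ (n + γ) / 2`. Since
`t ^ (n + γ) q (t z)` has `t`-derivative `t ^ (n + γ - 1) φ (t z)`, comparing on `[0, 1]` with
`t ^ (n + γ) / 2` gives `‖q‖ ≤ 1 / 2`, hence `‖z f' - f‖ ≤ ‖z‖ ^ (n + 1) / 2 < 1 / 2`. -/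

open Asymptotics Filter Topology

-- Where the series diverges, `tsum` is `0`; the bound holds either way.
theorem tsum_mul_pow_isBigO_one (a : ℕ → ℂ) :
    (fun z : ℂ => ∑' k, a k * z ^ k) =O[𝓝 0] fun _ => (1 : ℂ) := by
  by_cases hconv : ∃ w ≠ 0, Summable fun k => a k * w ^ k
  · obtain ⟨w, hw, hsum⟩ := hconv
    refine IsBigO.of_bound (∑' k, ‖a k * w ^ k‖) ?_
    filter_upwards [closedBall_mem_nhds (0 : ℂ) (norm_pos_iff.mpr hw)] with z hz
    rw [mem_closedBall_zero_iff] at hz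
    rw [norm_one, mul_one]
    refine tsum_of_norm_bounded hsum.norm.hasSum fun k => ?_
    simp only [norm_mul, norm_pow]
    gcongr
  · push Not at hconv
    refine IsBigO.of_bound ‖∑' k, a k * (0 : ℂ) ^ k‖ (Eventually.of_forall fun z => ?_)
    rcases eq_or_ne z 0 with rfl | hz
    · simp
    · simp [tsum_eq_zero_of_not_summable (hconv z hz)]

theorem MemA.isBigO_sub_id {n : ℕ} {f : ℂ → ℂ} (hf : MemA n f) :
    (fun z => f z - z) =O[𝓝 0] (· ^ (n + 1)) := by
  obtain ⟨-, a, ha⟩ := hf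
  have heq : (fun z => z ^ (n + 1) * ∑' k, a k * z ^ k) =ᶠ[𝓝 0] fun z => f z - z := by
    filter_upwards [ball_mem_nhds (0 : ℂ) one_pos] with z hz
    simp only [ha z hz, add_sub_cancel_left, ← tsum_mul_left, pow_add]
    ring_nf
  simpa using ((isBigO_refl (· ^ (n + 1)) _).mul (tsum_mul_pow_isBigO_one a)).congr' heq
    EventuallyEq.rfl

theorem exists_eqOn_pow_mul_of_isBigO {s : Set ℂ} (hs : s ∈ 𝓝 0) (m : ℕ) {u : ℂ → ℂ}
    (hu : DifferentiableOn ℂ u s) (hO : u =O[𝓝[≠] 0] (· ^ m)) :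
    ∃ v, DifferentiableOn ℂ v s ∧ Set.EqOn u (fun z => z ^ m * v z) s := by
  induction m generalizing u with
  | zero => exact ⟨u, hu, fun z _ => by simp⟩
  | succ k ih =>
    have hu0 : u 0 = 0 := by
      have hlim : Tendsto u (𝓝[≠] 0) (𝓝 0) :=
        hO.trans_tendsto <| by
          simpa using ((continuous_pow (k + 1)).tendsto (0 : ℂ)).mono_left nhdsWithin_le_nhds
      exact tendsto_nhds_unique
        (((hu.continuousOn.continuousAt hs).tendsto).mono_left nhdsWithin_le_nhds) hlim
    have hslope : dslope u 0 =O[𝓝[≠] 0] (· ^ k) := by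
      have hinv : (fun z => z⁻¹ * u z) =O[𝓝[≠] 0] fun z : ℂ => z⁻¹ * z ^ (k + 1) :=
        (isBigO_refl _ _).mul hO
      refine hinv.congr' ?_ ?_ <;> filter_upwards [self_mem_nhdsWithin] with z hz
      · rw [dslope_of_ne _ hz, slope_def_field, hu0, sub_zero, sub_zero, div_eq_inv_mul]
      · rw [pow_succ, mul_comm, mul_assoc, mul_inv_cancel₀ hz, mul_one]
    obtain ⟨v, hv, huv⟩ := ih ((Complex.differentiableOn_dslope hs).mpr hu) hslope
    refine ⟨v, hv, fun z hz => ?_⟩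
    have h := sub_smul_dslope u 0 z
    simp only [hu0, sub_zero, smul_eq_mul] at h
    rw [← h, huv hz]
    ring

theorem hasDerivAt_pow_succ_mul {v : ℂ → ℂ} {z : ℂ} (m : ℕ) (hv : DifferentiableAt ℂ v z) :
    HasDerivAt (fun w => w ^ (m + 1) * v w) (z ^ m * ((m + 1) * v z + z * deriv v z)) z := by
  refine ((hasDerivAt_pow (m + 1) z).mul hv.hasDerivAt).congr_deriv ?_
  push_cast
  ring

theorem hasDerivAt_mul_deriv_sub {f : ℂ → ℂ} {z : ℂ} (hf : DifferentiableAt ℂ f z)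
    (hf' : DifferentiableAt ℂ (deriv f) z) :
    HasDerivAt (fun w => w * deriv f w - f w) (z * deriv (deriv f) z) z := by
  refine (((hasDerivAt_id' z).mul hf'.hasDerivAt).sub hf.hasDerivAt).congr_deriv ?_
  ring

theorem eqOn_mul_deriv_sub_of_eqOn_add_pow_mul {s : Set ℂ} (hs : IsOpen s) (m : ℕ)
    {f p : ℂ → ℂ} (hp : DifferentiableOn ℂ p s)
    (hfp : Set.EqOn f (fun z => z + z ^ (m + 1) * p z) s) :
    Set.EqOn (fun z => z * deriv f z - f z)
      (fun z => z ^ (m + 1) * (m * p z + z * deriv p z)) s := by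
  intro z hz
  have hf : HasDerivAt f (1 + z ^ m * ((m + 1) * p z + z * deriv p z)) z :=
    ((hasDerivAt_id' z).add (hasDerivAt_pow_succ_mul m (hp.differentiableAt (hs.mem_nhds hz))))
      |>.congr_of_eventuallyEq (eventually_of_mem (hs.mem_nhds hz) hfp)
  simp only [hf.deriv, hfp hz]
  ring

theorem mul_deriv_deriv_add_eq_pow_mul {s : Set ℂ} (hs : IsOpen s) {f q : ℂ → ℂ}
    (hf : DifferentiableOn ℂ f s) (hq : DifferentiableOn ℂ q s) (n : ℕ) (β : ℂ)
    (hg : Set.EqOn (fun z => z * deriv f z - f z) (fun z => z ^ (n + 1) * q z) s)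
    {z : ℂ} (hz : z ∈ s) (hz0 : z ≠ 0) :
    z * deriv (deriv f) z + β * (deriv f z - f z / z) =
      z ^ n * ((n + 1 + β) * q z + z * deriv q z) := by
  have hfa := hf.analyticOnNhd hs
  have hgz := hasDerivAt_mul_deriv_sub (hfa z hz).differentiableAt
    (hfa.deriv z hz).differentiableAt
  have hgz' := (hasDerivAt_pow_succ_mul n (hq.differentiableAt (hs.mem_nhds hz)))
    |>.congr_of_eventuallyEq (eventually_of_mem (hs.mem_nhds hz) hg)
  rw [hgz.unique hgz', ← mul_div_cancel_left₀ (deriv f z - f z / z) hz0, mul_sub,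
    mul_div_cancel₀ _ hz0, show z * deriv f z - f z = z ^ (n + 1) * q z from hg hz]
  field_simp
  ring

theorem norm_le_of_forall_norm_pow_mul_le {φ : ℂ → ℂ} (hφ : DifferentiableOn ℂ φ (ball 0 1))
    (n : ℕ) {M : ℝ} (hM : ∀ z ∈ ball (0 : ℂ) 1, z ≠ 0 → ‖z ^ n * φ z‖ ≤ M) :
    ∀ z ∈ ball (0 : ℂ) 1, ‖φ z‖ ≤ M := by
  intro z hz
  rw [mem_ball_zero_iff] at hz
  have hsphere : ∀ r ∈ Set.Ioo ‖z‖ 1, ‖φ z‖ ≤ M / r ^ n := by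
    rintro r ⟨hzr, hr1⟩
    have hr : 0 < r := (norm_nonneg z).trans_lt hzr
    refine Complex.norm_le_of_forall_mem_frontier_norm_le isBounded_ball
      (hφ.mono ((closure_ball 0 hr.ne').trans_subset (closedBall_subset_ball hr1))).diffContOnCl
      (fun w hw => ?_) (subset_closure (mem_ball_zero_iff.mpr hzr))
    rw [frontier_ball 0 hr.ne', mem_sphere_zero_iff_norm] at hw
    have hw0 : w ≠ 0 := norm_pos_iff.mp (hw ▸ hr)
    have := hM w (mem_ball_zero_iff.mpr (hw ▸ hr1)) hw0
    rw [norm_mul, norm_pow, hw] at this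
    rwa [le_div_iff₀ (pow_pos hr n), mul_comm]
  have hlim : Tendsto (fun r : ℝ => M / r ^ n) (𝓝[<] 1) (𝓝 M) := by
    have : ContinuousAt (fun r : ℝ => M / r ^ n) 1 :=
      continuousAt_const.div (continuous_pow n).continuousAt (by norm_num)
    simpa using this.tendsto.mono_left nhdsWithin_le_nhds
  exact ge_of_tendsto hlim (eventually_of_mem (Ioo_mem_nhdsLT hz) hsphere)

theorem norm_le_div_of_norm_mul_add_mul_deriv_le {q : ℂ → ℂ} (hq : DifferentiableOn ℂ q (ball 0 1))
    {c M : ℝ} (hc : 1 ≤ c) (hM : ∀ z ∈ ball (0 : ℂ) 1, ‖c * q z + z * deriv q z‖ ≤ M) :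
    ∀ z ∈ ball (0 : ℂ) 1, ‖q z‖ ≤ M / c := by
  intro z hz
  rw [mem_ball_zero_iff] at hz
  have hseg : ∀ t ∈ Set.Icc (0 : ℝ) 1, (t : ℂ) * z ∈ ball (0 : ℂ) 1 := by
    rintro t ⟨ht0, ht1⟩
    rw [mem_ball_zero_iff, norm_mul, Complex.norm_real, Real.norm_of_nonneg ht0]
    nlinarith [norm_nonneg z]
  have hderiv : ∀ t ∈ Set.Icc (0 : ℝ) 1, HasDerivAt (fun s : ℝ => ((s ^ c : ℝ) : ℂ) * q (s * z))
      (((t ^ (c - 1) : ℝ) : ℂ) * (c * q (t * z) + t * z * deriv q (t * z))) t := by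
    intro t ht
    have hpow : HasDerivAt (fun s : ℝ => ((s ^ c : ℝ) : ℂ)) ((c * t ^ (c - 1) : ℝ) : ℂ) t :=
      (Real.hasDerivAt_rpow_const (Or.inr hc)).ofReal_comp
    have hqt : HasDerivAt (fun s : ℝ => q (s * z)) (deriv q (t * z) * z) t := by
      have hlin : HasDerivAt (fun w : ℂ => w * z) z (t : ℂ) := by
        simpa using (hasDerivAt_id (t : ℂ)).mul_const z
      exact ((hq.differentiableAt (isOpen_ball.mem_nhds (hseg t ht))).hasDerivAt.comp (t : ℂ)
        hlin).comp_ofReal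
    refine (hpow.mul hqt).congr_deriv ?_
    rw [show t ^ c = t ^ (c - 1) * t by
      rw [← Real.rpow_add_one' ht.1 (by linarith), sub_add_cancel]]
    push_cast
    ring
  have hbound := image_norm_le_of_norm_deriv_right_le_deriv_boundary (a := 0) (b := 1)
    (f := fun s : ℝ => ((s ^ c : ℝ) : ℂ) * q (s * z))
    (fun t ht => (hderiv t ht).continuousAt.continuousWithinAt)
    (fun t ht => (hderiv t (Set.Ico_subset_Icc_self ht)).hasDerivWithinAt)
    (B := fun s => M / c * s ^ c) (by simp [Real.zero_rpow (by linarith : c ≠ 0)])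
    (fun t => (Real.hasDerivAt_rpow_const (Or.inr hc)).const_mul (M / c))
    (fun t ht => by
      rw [norm_mul, Complex.norm_real, Real.norm_of_nonneg (Real.rpow_nonneg ht.1 _)]
      calc _ ≤ t ^ (c - 1) * M := by
            gcongr
            · exact Real.rpow_nonneg ht.1 _
            · exact hM _ (hseg t (Set.Ico_subset_Icc_self ht))
        _ = M / c * (c * t ^ (c - 1)) := by field_simp)
    (Set.right_mem_Icc.mpr zero_le_one)
  simpa using hbound

theorem stmt_0_general (n : ℕ) (γ : ℝ) (hγ : 1 ≤ γ) (f : ℂ → ℂ)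
    (hf : MemA n f)
    (h : ∀ z ∈ unitDisc, z ≠ 0 →
      ‖z * deriv (deriv f) z + ((γ : ℂ) - 1) * (deriv f z - f z / z)‖ < ((n : ℝ) + γ) / 2) :
    MemOmega n f := by
  obtain ⟨p, hp, hfp⟩ := exists_eqOn_pow_mul_of_isBigO (ball_mem_nhds 0 one_pos) (n + 1)
    (u := fun z => f z - z) (hf.1.sub differentiableOn_id)
    (hf.isBigO_sub_id.mono nhdsWithin_le_nhds)
  set q : ℂ → ℂ := fun z => n * p z + z * deriv p z
  have hpa : AnalyticOnNhd ℂ p unitDisc := hp.analyticOnNhd isOpen_ball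
  have hqa : AnalyticOnNhd ℂ q unitDisc :=
    (analyticOnNhd_const.mul hpa).add (analyticOnNhd_id.mul hpa.deriv)
  have hg : Set.EqOn (fun z => z * deriv f z - f z) (fun z => z ^ (n + 1) * q z) unitDisc :=
    eqOn_mul_deriv_sub_of_eqOn_add_pow_mul isOpen_ball n hp fun z hz => by
      linear_combination hfp hz
  have hφ : ∀ z ∈ unitDisc, z ≠ 0 →
      ‖z ^ n * (((n : ℝ) + γ : ℝ) * q z + z * deriv q z)‖ ≤ ((n : ℝ) + γ) / 2 := by
    intro z hz hz0
    refine le_of_eq_of_le ?_ (h z hz hz0).le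
    rw [mul_deriv_deriv_add_eq_pow_mul isOpen_ball hf.1 hqa.differentiableOn n _ hg hz hz0]
    push_cast
    ring_nf
  have hq : ∀ z ∈ unitDisc, ‖q z‖ ≤ ((n : ℝ) + γ) / 2 / ((n : ℝ) + γ) :=
    norm_le_div_of_norm_mul_add_mul_deriv_le hqa.differentiableOn
      (by linarith [n.cast_nonneg (α := ℝ)])
      (norm_le_of_forall_norm_pow_mul_le ((hqa.differentiableOn.const_mul _).add
        (differentiableOn_id.mul hqa.deriv.differentiableOn)) n hφ)
  refine ⟨hf, fun z hz => ?_⟩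
  rw [show z * deriv f z - f z = z ^ (n + 1) * q z from hg hz, norm_mul, norm_pow]
  calc
    ‖z‖ ^ (n + 1) * ‖q z‖ ≤ ‖z‖ ^ (n + 1) * (1 / 2) := by
      gcongr
      exact (hq z hz).trans_eq (by field_simp)
    _ < 1 / 2 := mul_lt_of_lt_one_left (by norm_num)
      (pow_lt_one₀ (norm_nonneg z) (mem_ball_zero_iff.mp hz) n.succ_ne_zero)

theorem stmt_0 (n : ℕ) (hn : 1 ≤ n) (γ : ℝ) (hγ : 1 ≤ γ) (f : ℂ → ℂ)
    (hf : MemA n f)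
    (h : ∀ z ∈ unitDisc, z ≠ 0 →
      ‖z * deriv (deriv f) z + ((γ : ℂ) - 1) * (deriv f z - f z / z)‖ < ((n : ℝ) + γ) / 2) :
    MemOmega n f :=
  stmt_0_general n γ hγ f hf h
end

section
/- If f ∈ A satisfies |z²·f''(z) + z·f'(z) − f(z)| < 3/2 for all z ∈ 𝔻, then f ∈ Ω. -/
open Complex Metric

/-! With `g = z f' - f`, the hypothesis bounds `H = z² f'' + z f' - f = (z g)'`. Since `f(0) = 0`,
`H` vanishes to second order at `0`, so the order-two Schwarz lemma gives `|H(z)| ≤ (3/2)|z|²`.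
Integrating along `[0, z]` yields `|z g(z)| ≤ |z|³/2`, i.e. `|g(z)| ≤ |z|²/2 < 1/2`. -/

open Set

section

variable {E : Type*} [NormedAddCommGroup E] [NormedSpace ℂ E]

theorem norm_le_div_sq_mul_sq_of_hasDerivAt_zero {H : ℂ → E} {R M : ℝ} {z : ℂ}
    (hd : DifferentiableOn ℂ H (ball 0 R)) (h0 : H 0 = 0) (h0' : HasDerivAt H 0 0)
    (hM : ∀ w ∈ ball (0 : ℂ) R, ‖H w‖ ≤ M) (hz : z ∈ ball (0 : ℂ) R) :
    ‖H z‖ ≤ M / R ^ 2 * ‖z‖ ^ 2 := by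
  have hmaps : MapsTo H (ball 0 R) (closedBall (H 0) M) := fun w hw ↦ by
    simpa [h0] using hM w hw
  have hlittleO : (fun w ↦ H w - H 0) =o[nhds 0] fun w ↦ ‖w - 0‖ ^ 1 := by
    simpa using h0'.isLittleO.norm_right
  have := dist_le_mul_div_pow_of_mapsTo_ball_of_isLittleO hd hmaps hlittleO hz
  rw [h0, dist_zero_right, dist_zero_right] at this
  exact this.trans_eq (by ring)

theorem norm_le_div_mul_pow_of_norm_deriv_le {G G' : ℂ → E} {R C : ℝ} {n : ℕ} {z : ℂ}
    (hG : ∀ w ∈ ball (0 : ℂ) R, HasDerivAt G (G' w) w) (h0 : G 0 = 0)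
    (hC : ∀ w ∈ ball (0 : ℂ) R, ‖G' w‖ ≤ C * ‖w‖ ^ n) (hz : z ∈ ball (0 : ℂ) R) :
    ‖G z‖ ≤ C / (n + 1) * ‖z‖ ^ (n + 1) := by
  have hseg : ∀ t ∈ Icc (0 : ℝ) 1, (t : ℂ) * z ∈ ball (0 : ℂ) R := fun t ht ↦ by
    rw [mem_ball_zero_iff, norm_mul, norm_real, Real.norm_of_nonneg ht.1]
    exact (mul_le_of_le_one_left (norm_nonneg z) ht.2).trans_lt (mem_ball_zero_iff.mp hz)
  have hpath : ∀ t ∈ Icc (0 : ℝ) 1,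
      HasDerivAt (fun t : ℝ ↦ G (t * z)) (z • G' (t * z)) t := fun t ht ↦ by
    have := (hG _ (hseg t ht)).scomp t ((ofRealCLM.hasDerivAt (x := t)).mul_const z)
    simpa [Function.comp_def] using this
  have hbound := image_norm_le_of_norm_deriv_right_le_deriv_boundary
    (f := fun t : ℝ ↦ G (t * z)) (a := 0) (b := 1)
    (B := fun t ↦ C / (n + 1) * ‖z‖ ^ (n + 1) * t ^ (n + 1))
    (B' := fun t ↦ C * ‖z‖ ^ (n + 1) * t ^ n)
    (fun t ht ↦ (hpath t ht).continuousAt.continuousWithinAt)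
    (fun t ht ↦ (hpath t (Ico_subset_Icc_self ht)).hasDerivWithinAt)
    (by simp [h0]) (fun t ↦ ?_) (fun t ht ↦ ?_) (right_mem_Icc.mpr zero_le_one)
  · simpa using hbound
  · refine ((hasDerivAt_pow (n + 1) t).const_mul (C / (n + 1) * ‖z‖ ^ (n + 1))).congr_deriv ?_
    rw [Nat.add_sub_cancel]
    push_cast
    field_simp
  · have := hC _ (hseg t (Ico_subset_Icc_self ht))
    rw [norm_mul, norm_real, Real.norm_of_nonneg ht.1] at this
    calc ‖z • G' (t * z)‖ = ‖z‖ * ‖G' (t * z)‖ := norm_smul _ _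
      _ ≤ ‖z‖ * (C * (t * ‖z‖) ^ n) := by gcongr
      _ = C * ‖z‖ ^ (n + 1) * t ^ n := by ring

end

theorem MemA.apply_zero {n : ℕ} {f : ℂ → ℂ} (hf : MemA n f) : f 0 = 0 := by
  obtain ⟨-, a, ha⟩ := hf
  simpa using ha 0 (mem_ball_self one_pos)

section DerivIdentities

variable {f : ℂ → ℂ} {z : ℂ}

theorem hasDerivAt_mul_mul_deriv_sub (hf : DifferentiableAt ℂ f z)
    (hf' : DifferentiableAt ℂ (deriv f) z) :
    HasDerivAt (fun w ↦ w * (w * deriv f w - f w))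
      (z ^ 2 * deriv (deriv f) z + z * deriv f z - f z) z := by
  refine ((hasDerivAt_id' z).mul (((hasDerivAt_id' z).mul hf'.hasDerivAt).sub
    hf.hasDerivAt)).congr_deriv ?_
  simp only [Pi.mul_apply, Pi.sub_apply]
  ring

theorem hasDerivAt_sq_mul_deriv_deriv_add_mul_deriv_sub (hf : DifferentiableAt ℂ f z)
    (hf' : DifferentiableAt ℂ (deriv f) z) (hf'' : DifferentiableAt ℂ (deriv (deriv f)) z) :
    HasDerivAt (fun w ↦ w ^ 2 * deriv (deriv f) w + w * deriv f w - f w)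
      (3 * z * deriv (deriv f) z + z ^ 2 * deriv (deriv (deriv f)) z) z := by
  refine ((((hasDerivAt_pow 2 z).mul hf''.hasDerivAt).add
    ((hasDerivAt_id' z).mul hf'.hasDerivAt)).sub hf.hasDerivAt).congr_deriv ?_
  ring

theorem norm_mul_deriv_sub_le {f : ℂ → ℂ} {M : ℝ} (hd : DifferentiableOn ℂ f unitDisc)
    (hf0 : f 0 = 0)
    (h : ∀ z ∈ unitDisc, ‖z ^ 2 * deriv (deriv f) z + z * deriv f z - f z‖ ≤ M)
    {z : ℂ} (hz : z ∈ unitDisc) :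
    ‖z * deriv f z - f z‖ ≤ M / 3 * ‖z‖ ^ 2 := by
  have hd' := hd.deriv isOpen_ball
  have hd'' := hd'.deriv isOpen_ball
  have hdiffAt {g : ℂ → ℂ} (hg : DifferentiableOn ℂ g unitDisc) {w : ℂ} (hw : w ∈ unitDisc) :
      DifferentiableAt ℂ g w :=
    hg.differentiableAt (isOpen_ball.mem_nhds hw)
  have h0 : (0 : ℂ) ∈ unitDisc := mem_ball_self one_pos
  have hdH : DifferentiableOn ℂ
      (fun w ↦ w ^ 2 * deriv (deriv f) w + w * deriv f w - f w) unitDisc :=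
    (((differentiableOn_id.pow 2).mul hd'').add (differentiableOn_id.mul hd')).sub hd
  have hH0' : HasDerivAt (fun w ↦ w ^ 2 * deriv (deriv f) w + w * deriv f w - f w) 0 0 := by
    simpa using hasDerivAt_sq_mul_deriv_deriv_add_mul_deriv_sub (hdiffAt hd h0)
      (hdiffAt hd' h0) (hdiffAt hd'' h0)
  have hsecond : ∀ w ∈ unitDisc,
      ‖w ^ 2 * deriv (deriv f) w + w * deriv f w - f w‖ ≤ M / 1 ^ 2 * ‖w‖ ^ 2 :=
    fun w hw ↦ norm_le_div_sq_mul_sq_of_hasDerivAt_zero hdH (by simp [hf0]) hH0' h hw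
  have hcubic : ‖z‖ * ‖z * deriv f z - f z‖ ≤ ‖z‖ * (M / 3 * ‖z‖ ^ 2) := by
    rw [← norm_mul]
    refine (norm_le_div_mul_pow_of_norm_deriv_le (fun w hw ↦ hasDerivAt_mul_mul_deriv_sub
      (hdiffAt hd hw) (hdiffAt hd' hw)) (by simp) hsecond hz).trans_eq ?_
    norm_num
    ring
  rcases eq_or_ne z 0 with rfl | hz0
  · simp [hf0]
  · exact le_of_mul_le_mul_left hcubic (norm_pos_iff.mpr hz0)

theorem stmt_2 (f : ℂ → ℂ)
    (hf : MemA 1 f)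
    (h : ∀ z ∈ unitDisc, ‖z ^ 2 * deriv (deriv f) z + z * deriv f z - f z‖ < 3 / 2) :
    MemOmega 1 f := by
  refine ⟨hf, fun z hz ↦ ?_⟩
  have hz1 : ‖z‖ < 1 := mem_ball_zero_iff.mp hz
  calc ‖z * deriv f z - f z‖ ≤ 3 / 2 / 3 * ‖z‖ ^ 2 :=
        norm_mul_deriv_sub_le hf.1 hf.apply_zero (fun w hw ↦ (h w hw).le) hz
    _ < 1 / 2 := by nlinarith [norm_nonneg z]
end DerivIdentities
end

section
/- Let n ≥ 1 be an integer, γ ≥ 1 a real number, and let f(z) = z + ∑_{k=n+1}^∞ a_k z^k be analytic on 𝔻. If ∑_{k=n+1}^∞ (k−1)·(k+γ−1)·|a_k| ≤ (n+γ)/2, then f ∈ Ω_n. -/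
/-!
Writing `f(z) = z + ∑ a_j z^j` (`j ≥ n + 1`), termwise differentiation gives
`z f'(z) - f(z) = ∑ (j - 1) a_j z^j`, so `|z f'(z) - f(z)| ≤ |z|^(n+1) ∑ (j - 1) |a_j|`.
Since `j + γ - 1 ≥ n + γ > 0`, the hypothesis forces `∑ (j - 1) |a_j| ≤ 1/2`, and `|z|^(n+1) < 1`
makes the bound strict.
-/

open Complex Metric

section PowerSeries

variable {a b : ℕ → ℂ} {n : ℕ} {z : ℂ}

lemma norm_mul_pow_le_of_norm_le_one (hz : ‖z‖ ≤ 1) (c : ℂ) (m k : ℕ) :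
    ‖c * z ^ (m + k)‖ ≤ ‖c‖ * ‖z‖ ^ m := by
  rw [norm_mul, norm_pow, pow_add]
  gcongr
  exact mul_le_of_le_one_right (by positivity) (pow_le_one₀ (norm_nonneg z) hz)

lemma summable_mul_pow_of_norm_le_one (hb : Summable fun k => ‖b k‖) (hz : ‖z‖ ≤ 1) (m : ℕ) :
    Summable fun k => b k * z ^ (m + k) :=
  .of_norm_bounded (hb.mul_right (‖z‖ ^ m)) fun k => norm_mul_pow_le_of_norm_le_one hz (b k) m k

lemma norm_tsum_mul_pow_le (hb : Summable fun k => ‖b k‖) (hz : ‖z‖ ≤ 1) (m : ℕ) :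
    ‖∑' k, b k * z ^ (m + k)‖ ≤ (∑' k, ‖b k‖) * ‖z‖ ^ m :=
  tsum_of_norm_bounded (hb.hasSum.mul_right _) fun k => norm_mul_pow_le_of_norm_le_one hz (b k) m k

lemma norm_natCast_mul (m : ℕ) (c : ℂ) : ‖(m : ℂ) * c‖ = m * ‖c‖ := by
  rw [norm_mul, Complex.norm_natCast]

lemma hasDerivAt_tsum_mul_pow (ha : Summable fun k => ((n + 1 + k : ℕ) : ℝ) * ‖a k‖)
    (hz : z ∈ ball (0 : ℂ) 1) :
    HasDerivAt (fun y => ∑' k, a k * y ^ (n + 1 + k))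
      (∑' k, ((n + 1 + k : ℕ) : ℂ) * a k * z ^ (n + k)) z := by
  refine hasDerivAt_tsum_of_isPreconnected ha isOpen_ball (convex_ball 0 1).isPreconnected
    (g := fun k y => a k * y ^ (n + 1 + k))
    (g' := fun k y => ((n + 1 + k : ℕ) : ℂ) * a k * y ^ (n + k))
    (fun k y _ => ?_) (fun k y hy => ?_) (mem_ball_self one_pos) ?_ hz
  · refine ((hasDerivAt_pow (n + 1 + k) y).const_mul (a k)).congr_deriv ?_
    rw [show n + 1 + k - 1 = n + k by omega]
    ring
  · simpa only [zero_add, pow_zero, mul_one, norm_natCast_mul] using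
      norm_mul_pow_le_of_norm_le_one (mem_ball_zero_iff.mp hy).le
        (((n + 1 + k : ℕ) : ℂ) * a k) 0 (n + k)
  · simp

lemma mul_tsum_sub_tsum_eq (ha : Summable fun k => ((n + 1 + k : ℕ) : ℝ) * ‖a k‖)
    (hz : ‖z‖ ≤ 1) :
    z * ∑' k, ((n + 1 + k : ℕ) : ℂ) * a k * z ^ (n + k) - ∑' k, a k * z ^ (n + 1 + k)
      = ∑' k, ((n + k : ℕ) : ℂ) * a k * z ^ (n + 1 + k) := by
  have hb : Summable fun k => ‖((n + 1 + k : ℕ) : ℂ) * a k‖ := by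
    simpa only [norm_natCast_mul] using ha
  have ha' : Summable fun k => ‖a k‖ :=
    ha.of_nonneg_of_le (fun k => norm_nonneg _) fun k =>
      le_mul_of_one_le_left (norm_nonneg _) (Nat.one_le_cast.mpr (by omega))
  rw [← tsum_mul_left, ← (summable_mul_pow_of_norm_le_one hb hz n).mul_left z |>.tsum_sub
    (summable_mul_pow_of_norm_le_one ha' hz (n + 1))]
  refine tsum_congr fun k => ?_
  rw [Nat.add_right_comm n 1 k, pow_succ]
  push_cast
  ring

end PowerSeries

lemma summable_and_tsum_mul_norm_le_half {a : ℕ → ℂ} {n : ℕ} {γ : ℝ} (hγ : 1 ≤ γ)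
    (hsum : Summable fun k : ℕ => ((n : ℝ) + k) * (((n : ℝ) + k) + γ) * ‖a k‖)
    (hle : ∑' k : ℕ, ((n : ℝ) + k) * (((n : ℝ) + k) + γ) * ‖a k‖ ≤ ((n : ℝ) + γ) / 2) :
    Summable (fun k : ℕ => ((n : ℝ) + k) * ‖a k‖) ∧ ∑' k : ℕ, ((n : ℝ) + k) * ‖a k‖ ≤ 1 / 2 := by
  have hweight : ∀ k : ℕ, ((n : ℝ) + γ) * (((n : ℝ) + k) * ‖a k‖)
      ≤ ((n : ℝ) + k) * (((n : ℝ) + k) + γ) * ‖a k‖ := fun k => by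
    have : (0 : ℝ) ≤ ((n : ℝ) + k) * k * ‖a k‖ := by positivity
    nlinarith
  have hs : Summable fun k : ℕ => ((n : ℝ) + k) * ‖a k‖ :=
    hsum.of_nonneg_of_le (fun k => by positivity) fun k => by
      have : (0 : ℝ) ≤ ((n : ℝ) + k) * ‖a k‖ := by positivity
      nlinarith [hweight k]
  refine ⟨hs, le_of_mul_le_mul_left ?_ (by positivity : (0 : ℝ) < n + γ)⟩
  calc ((n : ℝ) + γ) * ∑' k : ℕ, ((n : ℝ) + k) * ‖a k‖
      ≤ ∑' k : ℕ, ((n : ℝ) + k) * (((n : ℝ) + k) + γ) * ‖a k‖ := by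
        rw [← tsum_mul_left]; exact (hs.mul_left _).tsum_le_tsum hweight hsum
    _ ≤ ((n : ℝ) + γ) * (1 / 2) := by linarith

theorem stmt_3 (n : ℕ) (hn : 1 ≤ n) (γ : ℝ) (hγ : 1 ≤ γ) (f : ℂ → ℂ) (a : ℕ → ℂ)
    (hf : DifferentiableOn ℂ f unitDisc)
    (hrep : ∀ z ∈ unitDisc, f z = z + ∑' k : ℕ, a k * z ^ (n + 1 + k))
    (hsum : Summable fun k : ℕ => ((n : ℝ) + k) * (((n : ℝ) + k) + γ) * ‖a k‖)
    (hle : ∑' k : ℕ, ((n : ℝ) + k) * (((n : ℝ) + k) + γ) * ‖a k‖ ≤ ((n : ℝ) + γ) / 2) :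
    MemOmega n f := by
  obtain ⟨hs, hs_le⟩ := summable_and_tsum_mul_norm_le_half hγ hsum hle
  have hb : Summable fun k => ‖((n + k : ℕ) : ℂ) * a k‖ :=
    hs.congr fun k => by rw [norm_natCast_mul, Nat.cast_add]
  have hs' : Summable fun k => ((n + 1 + k : ℕ) : ℝ) * ‖a k‖ :=
    (hs.mul_left 2).of_nonneg_of_le (fun k => by positivity) fun k => by
      have : (1 : ℝ) ≤ n := by exact_mod_cast hn
      have : (0 : ℝ) ≤ ‖a k‖ := norm_nonneg _
      push_cast; nlinarith
  refine ⟨⟨hf, a, hrep⟩, fun z hz => ?_⟩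
  have hz1 : ‖z‖ < 1 := mem_ball_zero_iff.mp hz
  have hderiv : deriv f z = 1 + ∑' k, ((n + 1 + k : ℕ) : ℂ) * a k * z ^ (n + k) :=
    ((hasDerivAt_id z).add (hasDerivAt_tsum_mul_pow hs' hz)).congr_of_eventuallyEq
      (Filter.eventually_of_mem (isOpen_ball.mem_nhds hz) hrep) |>.deriv
  have hnorm : ∑' k, ‖((n + k : ℕ) : ℂ) * a k‖ ≤ 1 / 2 :=
    (tsum_congr fun k => by rw [norm_natCast_mul, Nat.cast_add]).trans_le hs_le
  calc ‖z * deriv f z - f z‖ = ‖∑' k, ((n + k : ℕ) : ℂ) * a k * z ^ (n + 1 + k)‖ := by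
        rw [hderiv, hrep z hz, ← mul_tsum_sub_tsum_eq hs' hz1.le]
        congr 1; ring
    _ ≤ (∑' k, ‖((n + k : ℕ) : ℂ) * a k‖) * ‖z‖ ^ (n + 1) := norm_tsum_mul_pow_le hb hz1.le _
    _ ≤ 1 / 2 * ‖z‖ ^ (n + 1) := by gcongr
    _ < 1 / 2 := by
        have : ‖z‖ ^ (n + 1) < 1 := pow_lt_one₀ (norm_nonneg z) hz1 n.succ_ne_zero
        linarith
end

section
/- Let n ≥ 1 be an integer and let f(z) = z + ∑_{k=n+1}^∞ a_k z^k be analytic on 𝔻. If ∑_{k=n+1}^∞ k·(k−1)·|a_k| ≤ (n+1)/2, then f ∈ Ω_n. -/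
open Complex Metric

theorem stmt_4 (n : ℕ) (hn : 1 ≤ n) (f : ℂ → ℂ) (a : ℕ → ℂ)
    (hf : DifferentiableOn ℂ f unitDisc)
    (hrep : ∀ z ∈ unitDisc, f z = z + ∑' k : ℕ, a k * z ^ (n + 1 + k))
    (hsum : Summable fun k : ℕ => ((n : ℝ) + 1 + k) * ((n : ℝ) + k) * ‖a k‖)
    (hle : ∑' k : ℕ, ((n : ℝ) + 1 + k) * ((n : ℝ) + k) * ‖a k‖ ≤ ((n : ℝ) + 1) / 2) :
    MemOmega n f := by
  have hnk : ∀ k : ℕ, (1 : ℝ) ≤ (n : ℝ) + k := fun k => by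
    have : (1:ℝ) ≤ (n:ℝ) := by exact_mod_cast hn
    have : (0:ℝ) ≤ (k:ℝ) := Nat.cast_nonneg k
    linarith
  -- Summable bounds
  have h1 : Summable fun k : ℕ => ((n : ℝ) + 1 + k) * ‖a k‖ := by
    apply hsum.of_nonneg_of_le (fun k => by positivity)
    intro k
    calc ((n:ℝ) + 1 + k) * ‖a k‖
        ≤ ((n:ℝ) + 1 + k) * ‖a k‖ * ((n:ℝ) + k) :=
          le_mul_of_one_le_right (by positivity) (hnk k)
      _ = ((n:ℝ) + 1 + k) * ((n:ℝ) + k) * ‖a k‖ := by ring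
  have h2 : Summable fun k : ℕ => ((n : ℝ) + k) * ‖a k‖ := by
    apply hsum.of_nonneg_of_le (fun k => by positivity)
    intro k
    have h11 : (1:ℝ) ≤ (n:ℝ) + 1 + k := by linarith [hnk k]
    calc ((n:ℝ) + k) * ‖a k‖
        ≤ ((n:ℝ) + k) * ‖a k‖ * ((n:ℝ) + 1 + k) :=
          le_mul_of_one_le_right (by positivity) h11
      _ = ((n:ℝ) + 1 + k) * ((n:ℝ) + k) * ‖a k‖ := by ring
  -- each term derivative
  set g : ℕ → ℂ → ℂ := fun k z => a k * z ^ (n + 1 + k) with hg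
  set g' : ℕ → ℂ → ℂ := fun k z => a k * (↑(n + 1 + k) * z ^ (n + k)) with hg'
  have hderiv : ∀ k (y : ℂ), HasDerivAt (g k) (g' k y) y := by
    intro k y
    have h := (hasDerivAt_pow (n + 1 + k) y).const_mul (a k)
    have e : n + 1 + k - 1 = n + k := by omega
    rw [e] at h
    exact h
  have hbound : ∀ k (y : ℂ), y ∈ ball (0:ℂ) 1 → ‖g' k y‖ ≤ ((n : ℝ) + 1 + k) * ‖a k‖ := by
    intro k y hy
    have hy1 : ‖y‖ ≤ 1 := le_of_lt (by simpa using mem_ball_zero_iff.mp hy)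
    have heq : ‖g' k y‖ = ((n:ℝ) + 1 + k) * ‖a k‖ * ‖y‖ ^ (n + k) := by
      simp only [hg', norm_mul, norm_pow, Complex.norm_natCast]
      push_cast
      ring
    rw [heq]
    have hpow : ‖y‖ ^ (n + k) ≤ 1 := pow_le_one₀ (norm_nonneg y) hy1
    exact mul_le_of_le_one_right (by positivity) hpow
  have hg0 : Summable fun k => g k 0 := by
    simp only [hg]
    simpa using summable_zero
  have HG : ∀ z ∈ ball (0:ℂ) 1,
      HasDerivAt (fun w => ∑' k, g k w) (∑' k, g' k z) z := fun z hz =>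
    hasDerivAt_tsum_of_isPreconnected h1 isOpen_ball (convex_ball _ _).isPreconnected
      (fun k y _ => hderiv k y) hbound (by simp) hg0 hz
  refine ⟨⟨hf, a, hrep⟩, ?_⟩
  intro z hz
  have hz' : z ∈ ball (0:ℂ) 1 := hz
  have hz1 : ‖z‖ < 1 := by simpa using mem_ball_zero_iff.mp hz'
  -- deriv f z
  have heq : f =ᶠ[nhds z] fun w => w + ∑' k, g k w := by
    filter_upwards [isOpen_ball.mem_nhds hz'] with w hw
    exact hrep w hw
  have hD : HasDerivAt (fun w => w + ∑' k, g k w) (1 + ∑' k, g' k z) z :=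
    (hasDerivAt_id z).add (HG z hz')
  have hderivf : deriv f z = 1 + ∑' k, g' k z := by
    rw [heq.deriv_eq, hD.deriv]
  -- summabilities at z
  have S1 : Summable fun k => g' k z :=
    Summable.of_norm (h1.of_nonneg_of_le (fun k => norm_nonneg _) (fun k => hbound k z hz'))
  have S2 : Summable fun k => g k z := by
    apply Summable.of_norm
    apply h1.of_nonneg_of_le (fun k => norm_nonneg _)
    intro k
    have hz1' : ‖z‖ ≤ 1 := hz1.le
    have hpow : ‖z‖ ^ (n + 1 + k) ≤ 1 := pow_le_one₀ (norm_nonneg z) hz1'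
    have : ‖g k z‖ = ‖a k‖ * ‖z‖ ^ (n + 1 + k) := by simp [hg, norm_mul, norm_pow]
    rw [this]
    have := hnk k
    nlinarith [norm_nonneg (a k)]
  -- key identity
  have key : z * deriv f z - f z = ∑' k, a k * ↑(n + k) * z ^ (n + 1 + k) := by
    rw [hderivf, hrep z hz]
    have : z * (1 + ∑' k, g' k z) - (z + ∑' k, g k z)
        = z * (∑' k, g' k z) - ∑' k, g k z := by ring
    rw [this, ← tsum_mul_left, ← Summable.tsum_sub (S1.mul_left z) S2]
    congr 1
    funext k
    simp only [hg, hg']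
    push_cast
    ring
  rw [key]
  -- bound the norm
  set T : ℝ := ∑' k, ((n : ℝ) + k) * ‖a k‖ with hT
  have hbnd : ‖∑' k, a k * ↑(n + k) * z ^ (n + 1 + k)‖
      ≤ ∑' k, ((n : ℝ) + k) * ‖a k‖ * ‖z‖ ^ (n + 1) := by
    apply tsum_of_norm_bounded (h2.mul_right _).hasSum
    intro k
    have heq : ‖a k * ↑(n + k) * z ^ (n + 1 + k)‖
        = ((n:ℝ) + k) * ‖a k‖ * ‖z‖ ^ (n + 1 + k) := by
      simp only [norm_mul, norm_pow, Complex.norm_natCast]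
      push_cast
      ring
    rw [heq]
    have h3 : ‖z‖ ^ (n + 1 + k) ≤ ‖z‖ ^ (n + 1) := by
      apply pow_le_pow_of_le_one (norm_nonneg z) hz1.le
      omega
    exact mul_le_mul_of_nonneg_left h3 (by positivity)
  rw [tsum_mul_right] at hbnd
  have hT12 : T ≤ 1 / 2 := by
    have hstep : ((n:ℝ) + 1) * T ≤ ((n:ℝ) + 1) / 2 := by
      rw [hT, ← tsum_mul_left]
      refine le_trans (Summable.tsum_le_tsum ?_ (h2.mul_left _) hsum) hle
      intro k
      calc ((n:ℝ) + 1) * (((n:ℝ) + k) * ‖a k‖)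
          ≤ ((n:ℝ) + 1 + k) * (((n:ℝ) + k) * ‖a k‖) :=
            mul_le_mul_of_nonneg_right (by linarith [Nat.cast_nonneg (α := ℝ) k]) (by positivity)
        _ = ((n:ℝ) + 1 + k) * ((n:ℝ) + k) * ‖a k‖ := by ring
    have hpos : (0:ℝ) < (n:ℝ) + 1 := by positivity
    nlinarith
  have hTnn : 0 ≤ T := tsum_nonneg (fun k => by positivity)
  have hpowlt : ‖z‖ ^ (n + 1) < 1 := pow_lt_one₀ (norm_nonneg z) hz1 (by omega)
  have hpnn : 0 ≤ ‖z‖ ^ (n + 1) := pow_nonneg (norm_nonneg z) _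
  calc ‖∑' k, a k * ↑(n + k) * z ^ (n + 1 + k)‖ ≤ T * ‖z‖ ^ (n + 1) := hbnd
    _ < 1 / 2 := by nlinarith
end

section
/- Let n ≥ 1 be an integer and let f ∈ Ω̂_n. Then Re(f(z)) > −(2n+1)/(2n) for all z ∈ 𝔻. -/
open Complex Metric

theorem stmt_8 (n : ℕ) (hn : 1 ≤ n) (f : ℂ → ℂ) (a : ℕ → ℂ)
    (hf : DifferentiableOn ℂ f unitDisc)
    (hrep : ∀ z ∈ unitDisc, f z = z + ∑' k : ℕ, a k * z ^ (n + 1 + k))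
    (hsum : Summable fun k : ℕ => ((n : ℝ) + 1 + k) * ((n : ℝ) + k) * ‖a k‖)
    (hle : ∑' k : ℕ, ((n : ℝ) + 1 + k) * ((n : ℝ) + k) * ‖a k‖ ≤ ((n : ℝ) + 1) / 2) :
    ∀ z ∈ unitDisc, (f z).re > -((2 * (n : ℝ) + 1) / (2 * (n : ℝ))) := by
  have hn1 : (1:ℝ) ≤ (n:ℝ) := by exact_mod_cast hn
  have hna : Summable fun k : ℕ => ‖a k‖ := by
    refine Summable.of_nonneg_of_le (fun k => norm_nonneg _) (fun k => ?_) hsum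
    have hk : (0:ℝ) ≤ (k:ℝ) := Nat.cast_nonneg k
    have hfac : (1:ℝ) ≤ ((n:ℝ)+1+k) * ((n:ℝ)+k) := by nlinarith
    nlinarith [mul_le_mul_of_nonneg_right hfac (norm_nonneg (a k))]
  have hSnn : (0:ℝ) ≤ ∑' k, ‖a k‖ := tsum_nonneg fun k => norm_nonneg _
  have hS : ∑' k, ‖a k‖ ≤ 1 / (2 * (n:ℝ)) := by
    have h1 : ((n:ℝ)+1) * (n:ℝ) * ∑' k, ‖a k‖ ≤ ((n:ℝ)+1)/2 := by
      rw [← tsum_mul_left]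
      refine le_trans (Summable.tsum_le_tsum (fun k => ?_) (hna.mul_left _) hsum) hle
      have hk : (0:ℝ) ≤ (k:ℝ) := Nat.cast_nonneg k
      have hfac : ((n:ℝ)+1) * (n:ℝ) ≤ ((n:ℝ)+1+k) * ((n:ℝ)+k) := by nlinarith
      nlinarith [mul_le_mul_of_nonneg_right hfac (norm_nonneg (a k))]
    rw [le_div_iff₀ (by positivity)]
    nlinarith
  intro z hz
  have hz1 : ‖z‖ < 1 := by simpa [unitDisc] using hz
  have hterm : ∀ k : ℕ, ‖a k * z ^ (n + 1 + k)‖ ≤ ‖z‖ * ‖a k‖ := by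
    intro k
    rw [norm_mul, norm_pow]
    have h1 : ‖z‖ ^ (n + 1 + k) ≤ ‖z‖ ^ 1 :=
      pow_le_pow_of_le_one (norm_nonneg z) hz1.le (by omega)
    rw [pow_one] at h1
    calc ‖a k‖ * ‖z‖ ^ (n + 1 + k) ≤ ‖a k‖ * ‖z‖ :=
          mul_le_mul_of_nonneg_left h1 (norm_nonneg _)
      _ = ‖z‖ * ‖a k‖ := mul_comm _ _
  have hnsum : Summable fun k : ℕ => ‖a k * z ^ (n + 1 + k)‖ :=
    Summable.of_nonneg_of_le (fun k => norm_nonneg _) hterm (hna.mul_left _)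
  have hT : ‖∑' k : ℕ, a k * z ^ (n + 1 + k)‖ ≤ ‖z‖ * ∑' k, ‖a k‖ := by
    calc ‖∑' k : ℕ, a k * z ^ (n + 1 + k)‖ ≤ ∑' k : ℕ, ‖a k * z ^ (n + 1 + k)‖ :=
          norm_tsum_le_tsum_norm hnsum
      _ ≤ ∑' k : ℕ, ‖z‖ * ‖a k‖ := Summable.tsum_le_tsum hterm hnsum (hna.mul_left _)
      _ = ‖z‖ * ∑' k, ‖a k‖ := tsum_mul_left
  rw [hrep z hz]
  set T := ∑' k : ℕ, a k * z ^ (n + 1 + k) with hTdef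
  have hre : (z + T).re = z.re + T.re := Complex.add_re z T
  rw [hre]
  have h1 : |z.re| ≤ ‖z‖ := Complex.abs_re_le_norm z
  have h2 : |T.re| ≤ ‖T‖ := Complex.abs_re_le_norm T
  have h1' : -‖z‖ ≤ z.re := neg_le_of_abs_le h1
  have h2' : -‖T‖ ≤ T.re := neg_le_of_abs_le h2
  have hzS : ‖z‖ * ∑' k, ‖a k‖ ≤ ‖z‖ * (1 / (2 * (n:ℝ))) :=
    mul_le_mul_of_nonneg_left hS (norm_nonneg z)
  have hzn : (0:ℝ) ≤ ‖z‖ := norm_nonneg z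
  rw [gt_iff_lt, neg_lt, lt_div_iff₀ (by positivity : (0:ℝ) < 2 * (n:ℝ))]
  have hS2 : (2 * (n:ℝ)) * ∑' k, ‖a k‖ ≤ 1 := by
    rw [← le_div_iff₀' (by positivity : (0:ℝ) < 2 * (n:ℝ))]; exact hS
  nlinarith [mul_le_mul_of_nonneg_left hS2 hzn,
    mul_le_mul_of_nonneg_right hT (by positivity : (0:ℝ) ≤ 2 * (n:ℝ)),
    mul_le_mul_of_nonneg_left hz1.le (by positivity : (0:ℝ) ≤ 2 * (n:ℝ)),
    mul_le_mul_of_nonneg_right h2' (by positivity : (0:ℝ) ≤ 2 * (n:ℝ))]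
end

section
/- Let k ≥ 2 be an integer and a ∈ ℂ. If the function f(z) = z + a·z^k belongs to the parabolic starlike class S_p, then f ∈ Ω. -/
open Complex Metric

/-!
Put `f(z) = z + a z^k`. Choosing `w` in the disc with `a w^(k-1) = -s` for `0 < s < |a|`
makes `f(w) = w (1 - s)` and `w f'(w) = w (1 - k s)`, so `w f'(w)/f(w)` is the real number
`(1 - k s)/(1 - s)`. The parabolic condition `Re q > |q - 1|` forces a real `q` to exceed `1/2`;
together with `f(w) ≠ 0` (which rules out `s = 1`) this gives `(2k - 1)|a| ≤ 1`. Hence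
`|z f'(z) - f(z)| = (k - 1)|a||z|^k ≤ (k - 1)/(2k - 1) < 1/2`.
-/

/-- The inequality defining `S_p`, without the normalisation `f ∈ A`. -/
def ParabolicStarlikeCondition (f : ℂ → ℂ) : Prop :=
  ∀ z ∈ unitDisc, z ≠ 0 →
    f z ≠ 0 ∧ (z * deriv f z / f z).re > ‖z * deriv f z / f z - 1‖

theorem ParabolicStarlikeCondition.half_lt {f : ℂ → ℂ} (hf : ParabolicStarlikeCondition f)
    {z : ℂ} (hz : z ∈ unitDisc) (hz0 : z ≠ 0) {x : ℝ} (hx : z * deriv f z = x * f z) :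
    1 / 2 < x := by
  obtain ⟨hfz, hre⟩ := hf z hz hz0
  rw [hx, mul_div_cancel_right₀ _ hfz, ofReal_re, ← ofReal_one, ← ofReal_sub, norm_real,
    Real.norm_eq_abs] at hre
  linarith [neg_abs_le (x - 1)]

theorem memA_add_const_mul_pow {n k : ℕ} (hk : n < k) (a : ℂ) :
    MemA n fun z => z + a * z ^ k := by
  refine ⟨(differentiable_id.add ((differentiable_pow k).const_mul a)).differentiableOn,
    fun j => if n + 1 + j = k then a else 0, fun z _ => ?_⟩
  rw [tsum_eq_single (k - (n + 1)) fun j hj => by grind]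
  grind

theorem deriv_add_const_mul_pow (a : ℂ) (k : ℕ) (z : ℂ) :
    deriv (fun w => w + a * w ^ k) z = 1 + a * (k * z ^ (k - 1)) :=
  ((hasDerivAt_id z).add ((hasDerivAt_pow k z).const_mul a)).deriv

theorem mul_deriv_sub_add_const_mul_pow {k : ℕ} (hk : k ≠ 0) (a z : ℂ) :
    z * deriv (fun w => w + a * w ^ k) z - (z + a * z ^ k) = (k - 1) * a * z ^ k := by
  obtain ⟨m, rfl⟩ : ∃ m, k = m + 1 := ⟨k - 1, by omega⟩
  rw [deriv_add_const_mul_pow, Nat.add_sub_cancel]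
  push_cast
  ring

theorem exists_mem_unitDisc_const_mul_pow_eq {m : ℕ} (hm : m ≠ 0) {a c : ℂ} (hc : c ≠ 0)
    (hca : ‖c‖ < ‖a‖) : ∃ w ∈ unitDisc, w ≠ 0 ∧ a * w ^ m = c := by
  have ha : a ≠ 0 := norm_pos_iff.mp ((norm_nonneg c).trans_lt hca)
  obtain ⟨w, hw⟩ := IsAlgClosed.exists_pow_nat_eq (c / a) (Nat.pos_of_ne_zero hm)
  have hw0 : w ≠ 0 := by
    rintro rfl
    exact div_ne_zero hc ha (by rw [← hw, zero_pow hm])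
  have hnorm : ‖w‖ ^ m < 1 := by
    rw [← norm_pow, hw, norm_div, div_lt_one (norm_pos_iff.mpr ha)]
    exact hca
  refine ⟨w, ?_, hw0, by rw [hw, mul_div_cancel₀ _ ha]⟩
  simpa [unitDisc] using (pow_lt_one_iff_of_nonneg (norm_nonneg w) hm).mp hnorm

theorem exists_mem_unitDisc_add_const_mul_pow_eq {k : ℕ} (hk : 2 ≤ k) {a : ℂ} {s : ℝ}
    (hs : 0 < s) (hsa : s < ‖a‖) :
    ∃ w ∈ unitDisc, w ≠ 0 ∧ w + a * w ^ k = w * (1 - s) ∧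
      w * deriv (fun w => w + a * w ^ k) w = w * (1 - k * s) := by
  obtain ⟨m, rfl⟩ : ∃ m, k = m + 2 := ⟨k - 2, by omega⟩
  obtain ⟨w, hw, hw0, hws⟩ := exists_mem_unitDisc_const_mul_pow_eq m.add_one_ne_zero
    (a := a) (c := -s) (neg_ne_zero.mpr (ofReal_ne_zero.mpr hs.ne'))
    (by rwa [norm_neg, norm_real, Real.norm_of_nonneg hs.le])
  refine ⟨w, hw, hw0, ?_, ?_⟩
  · linear_combination w * hws
  · rw [deriv_add_const_mul_pow]
    push_cast
    linear_combination (m + 2 : ℂ) * w * hws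

theorem two_mul_sub_one_mul_norm_le_one {k : ℕ} (hk : 2 ≤ k) {a : ℂ}
    (hf : ParabolicStarlikeCondition fun w => w + a * w ^ k) : (2 * k - 1 : ℝ) * ‖a‖ ≤ 1 := by
  have hnorm_le_one : ‖a‖ ≤ 1 := by
    by_contra! h
    obtain ⟨w, hw, hw0, hfw, -⟩ := exists_mem_unitDisc_add_const_mul_pow_eq hk one_pos h
    exact (hf w hw hw0).1 (by simp [hfw])
  have hk' : (0 : ℝ) < 2 * k - 1 := by
    have : (2 : ℝ) ≤ k := by exact_mod_cast hk
    linarith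
  rw [← le_div_iff₀' hk']
  refine le_of_forall_lt_imp_le_of_dense fun s hsa => ?_
  rcases le_or_gt s 0 with hs | hs
  · exact hs.trans (by positivity)
  obtain ⟨w, hw, hw0, hfw, hdw⟩ := exists_mem_unitDisc_add_const_mul_pow_eq hk hs hsa
  have hs1 : 0 < 1 - s := by linarith
  have hhalf := hf.half_lt hw hw0 (x := (1 - k * s) / (1 - s)) <| by
    rw [hdw, hfw]
    push_cast
    field_simp [show (1 : ℂ) - s ≠ 0 by exact_mod_cast hs1.ne']
  rw [lt_div_iff₀ hs1] at hhalf
  rw [le_div_iff₀' hk']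
  linarith

theorem stmt_10 (k : ℕ) (hk : 2 ≤ k) (a : ℂ)
    (hSp : ∀ z ∈ unitDisc, z ≠ 0 →
      (z + a * z ^ k ≠ 0 ∧
        (z * deriv (fun w => w + a * w ^ k) z / (z + a * z ^ k)).re >
          ‖z * deriv (fun w => w + a * w ^ k) z / (z + a * z ^ k) - 1‖)) :
    MemOmega 1 (fun z => z + a * z ^ k) := by
  refine ⟨memA_add_const_mul_pow hk a, fun z hz => ?_⟩
  have ha := two_mul_sub_one_mul_norm_le_one hk hSp
  have hzk : ‖z‖ ^ k ≤ 1 := pow_le_one₀ (norm_nonneg z) (mem_ball_zero_iff.mp hz).le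
  have hk1 : (1 : ℝ) ≤ k - 1 := by
    have : (2 : ℝ) ≤ k := by exact_mod_cast hk
    linarith
  rw [mul_deriv_sub_add_const_mul_pow (by omega), norm_mul, norm_mul, norm_pow,
    show ((k : ℂ) - 1) = ((k - 1 : ℝ) : ℂ) by push_cast; ring, norm_real,
    Real.norm_of_nonneg (by linarith)]
  calc (k - 1 : ℝ) * ‖a‖ * ‖z‖ ^ k ≤ (k - 1) * ‖a‖ := by
        have : 0 ≤ (k - 1 : ℝ) * ‖a‖ := by positivity
        exact mul_le_of_le_one_right this hzk
    _ < 1 / 2 := by nlinarith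
end

section
/- Let 0 ≤ α < 1 be real, let f ∈ Ω, and let z ∈ ℂ with 0 < |z| < 2(1−α)/(2−α). Then f(z) ≠ 0 and Re(z·f'(z)/f(z)) > α. (That is, the S*(α)-radius of starlikeness of order α for the class Ω is 2(1−α)/(2−α).) -/
open Complex Metric

/-!
Write `f z = z * q z` with `q = dslope f 0`, so that `q 0 = f' 0 = 1` and `z f' - f = z² q'`.
Since `z² q'` vanishes to second order at `0` and is bounded by `1/2` on the disc, the Schwarz
lemma gives `|q'| ≤ 1/2`, hence `|q z - 1| ≤ |z|/2` by the mean value inequality. Then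
`z f'/f = 1 + z q'/q` with `|z q'/q| ≤ (|z|/2)/(1 - |z|/2) = |z|/(2 - |z|)`, which is `< 1 - α`
exactly when `|z| < 2(1 - α)/(2 - α)`.
-/

open Filter Topology
open scoped ENNReal

lemma continuousAt_tsum_mul_pow {a : ℕ → ℂ} {z₀ : ℂ} (hz₀ : z₀ ≠ 0)
    (hs : Summable fun k => a k * z₀ ^ k) : ContinuousAt (fun w => ∑' k, a k * w ^ k) 0 := by
  set p := FormalMultilinearSeries.ofScalars ℂ a
  have hr : (‖z₀‖₊ : ℝ≥0∞) ≤ p.radius := p.le_radius_of_tendsto (l := 0) <| by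
    simpa [p, FormalMultilinearSeries.ofScalars_norm] using hs.tendsto_atTop_zero.norm
  have hp : 0 < p.radius := lt_of_lt_of_le (by simpa using hz₀) hr
  have := (p.hasFPowerSeriesOnBall hp).continuousOn.continuousAt (eball_mem_nhds _ hp)
  convert this using 2 with w
  rw [← FormalMultilinearSeries.ofScalarsSum, FormalMultilinearSeries.ofScalars_sum_eq]
  simp

lemma tendsto_pow_mul_tsum_mul_pow (a : ℕ → ℂ) {n : ℕ} (hn : n ≠ 0) :
    Tendsto (fun w : ℂ => w ^ n * ∑' k, a k * w ^ k) (𝓝 0) (𝓝 0) := by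
  by_cases h : ∃ z₀ ≠ 0, Summable fun k => a k * z₀ ^ k
  · obtain ⟨z₀, hz₀, hs⟩ := h
    simpa [hn] using ((continuous_pow n).tendsto 0).mul (continuousAt_tsum_mul_pow hz₀ hs).tendsto
  · -- off `0` the series diverges everywhere, so its `tsum` is the junk value `0`
    push Not at h
    refine tendsto_const_nhds.congr fun w => ?_
    rcases eq_or_ne w 0 with rfl | hw
    · simp [hn]
    · simp [tsum_eq_zero_of_not_summable (h w hw)]

namespace MemA

variable {n : ℕ} {f : ℂ → ℂ}

lemma exists_eq_add_pow_mul_tsum (hf : MemA n f) :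
    ∃ a : ℕ → ℂ, ∀ z ∈ unitDisc, f z = z + z ^ (n + 1) * ∑' k, a k * z ^ k := by
  obtain ⟨-, a, ha⟩ := hf
  refine ⟨a, fun z hz => ?_⟩
  rw [ha z hz, ← tsum_mul_left]
  exact congrArg _ (tsum_congr fun k => by ring)

lemma map_zero (hf : MemA n f) : f 0 = 0 := by
  obtain ⟨a, ha⟩ := hf.exists_eq_add_pow_mul_tsum
  simpa using ha 0 (mem_ball_self one_pos)

lemma hasDerivAt_zero (hf : MemA n f) (hn : n ≠ 0) : HasDerivAt f 1 0 := by
  obtain ⟨a, ha⟩ := hf.exists_eq_add_pow_mul_tsum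
  rw [hasDerivAt_iff_tendsto_slope]
  have hlim := (tendsto_pow_mul_tsum_mul_pow a hn).mono_left (nhdsWithin_le_nhds (s := {0}ᶜ))
  simpa using (hlim.const_add 1).congr' <| by
    filter_upwards [self_mem_nhdsWithin, nhdsWithin_le_nhds (ball_mem_nhds (0 : ℂ) one_pos)]
      with w hw hwD
    have hw0 : w ≠ 0 := hw
    rw [slope_def_field, ha w hwD, hf.map_zero]
    field_simp
    ring

end MemA

lemma norm_deriv_le_of_norm_sq_mul_deriv_le {q : ℂ → ℂ} {R M : ℝ}
    (hq : DifferentiableOn ℂ q (ball 0 R)) (hM : ∀ w ∈ ball (0 : ℂ) R, ‖w ^ 2 * deriv q w‖ ≤ M)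
    {z : ℂ} (hz : z ∈ ball (0 : ℂ) R) : ‖deriv q z‖ ≤ M / R ^ 2 := by
  have hR : 0 < R := pos_of_mem_ball hz
  have hq' : DifferentiableOn ℂ (deriv q) (ball 0 R) :=
    (hq.analyticOnNhd isOpen_ball).deriv.differentiableOn
  have hq'0 : ContinuousAt (deriv q) 0 := hq'.continuousOn.continuousAt (ball_mem_nhds 0 hR)
  set G : ℂ → ℂ := fun w => w ^ 2 * deriv q w
  have hG0 : G 0 = 0 := by simp [G]
  have hGd : DifferentiableOn ℂ G (ball 0 R) := (differentiableOn_id.pow 2).mul hq'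
  have hGmaps : Set.MapsTo G (ball 0 R) (closedBall (G 0) M) := fun w hw => by
    simpa [G, hG0] using hM w hw
  have hGo : (fun w => G w - G 0) =o[𝓝 0] fun w => ‖w - 0‖ ^ 1 := by
    simpa [G, hG0] using
      ((Asymptotics.isLittleO_pow_id one_lt_two).mul_isBigO (hq'0.tendsto.isBigO_one ℂ)).norm_right
  have hne : ∀ w ∈ ball (0 : ℂ) R, w ≠ 0 → ‖deriv q w‖ ≤ M / R ^ 2 := by
    intro w hw hw0
    have := dist_le_mul_div_pow_of_mapsTo_ball_of_isLittleO hGd hGmaps hGo hw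
    simp only [G, hG0, dist_zero_right, norm_mul, norm_pow, div_pow, one_add_one_eq_two] at this
    rw [mul_div_assoc', le_div_iff₀ (by positivity)] at this
    rw [le_div_iff₀ (by positivity)]
    refine le_of_mul_le_mul_left (a := ‖w‖ ^ 2) ?_ (by positivity)
    linarith
  rcases eq_or_ne z 0 with rfl | hz0
  · refine le_of_tendsto (hq'0.norm.tendsto.mono_left (nhdsWithin_le_nhds (s := {0}ᶜ))) ?_
    filter_upwards [self_mem_nhdsWithin, nhdsWithin_le_nhds (ball_mem_nhds 0 hR)]
      with w hw hwR using hne w hwR hw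
  · exact hne z hz hz0

section dslope

variable {f : ℂ → ℂ}

lemma differentiableAt_dslope_zero (hd : DifferentiableOn ℂ f unitDisc) {w : ℂ}
    (hw : w ∈ unitDisc) : DifferentiableAt ℂ (dslope f 0) w :=
  ((differentiableOn_dslope (ball_mem_nhds 0 one_pos)).mpr hd).differentiableAt
    (isOpen_ball.mem_nhds hw)

variable (hf0 : f 0 = 0)
include hf0

lemma mul_dslope_of_map_zero (w : ℂ) : w * dslope f 0 w = f w := by
  simpa [hf0] using sub_smul_dslope f 0 w

lemma mul_deriv_sub_eq_sq_mul_deriv_dslope {w : ℂ} (hq : DifferentiableAt ℂ (dslope f 0) w) :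
    w * deriv f w - f w = w ^ 2 * deriv (dslope f 0) w := by
  have hfd : HasDerivAt (fun w => w * dslope f 0 w)
      (1 * dslope f 0 w + w * deriv (dslope f 0) w) w :=
    (hasDerivAt_id' w).mul hq.hasDerivAt
  rw [funext (mul_dslope_of_map_zero hf0)] at hfd
  rw [hfd.deriv, ← mul_dslope_of_map_zero hf0 w]
  ring

lemma mul_deriv_div_eq_one_add_mul_deriv_dslope_div {z : ℂ} (hz : z ≠ 0)
    (hqz : dslope f 0 z ≠ 0) (hq : DifferentiableAt ℂ (dslope f 0) z) :
    z * deriv f z / f z = 1 + z * deriv (dslope f 0) z / dslope f 0 z := by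
  have hfz := mul_dslope_of_map_zero hf0 z
  have hfz0 : f z ≠ 0 := hfz ▸ mul_ne_zero hz hqz
  have hg := mul_deriv_sub_eq_sq_mul_deriv_dslope hf0 hq
  rw [show z * deriv f z = f z + z ^ 2 * deriv (dslope f 0) z by rw [← hg]; ring, ← hfz]
  field_simp

variable {M : ℝ} (hd : DifferentiableOn ℂ f unitDisc)
  (hM : ∀ w ∈ unitDisc, ‖w * deriv f w - f w‖ ≤ M)
include hd hM

lemma norm_deriv_dslope_le {z : ℂ} (hz : z ∈ unitDisc) : ‖deriv (dslope f 0) z‖ ≤ M := by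
  have hq : DifferentiableOn ℂ (dslope f 0) unitDisc := fun w hw =>
    (differentiableAt_dslope_zero hd hw).differentiableWithinAt
  have := norm_deriv_le_of_norm_sq_mul_deriv_le hq (fun w hw => by
    rw [← mul_deriv_sub_eq_sq_mul_deriv_dslope hf0 (differentiableAt_dslope_zero hd hw)]
    exact hM w hw) hz
  simpa using this

lemma norm_dslope_sub_deriv_le {z : ℂ} (hz : z ∈ unitDisc) :
    ‖dslope f 0 z - deriv f 0‖ ≤ M * ‖z‖ := by
  simpa using (convex_ball (0 : ℂ) 1).norm_image_sub_le_of_norm_deriv_le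
    (fun w hw => differentiableAt_dslope_zero hd hw)
    (fun w hw => norm_deriv_dslope_le hf0 hd hM hw) (mem_ball_self one_pos) hz

end dslope

lemma lt_re_one_add_div {u v : ℂ} {r α : ℝ} (hα1 : α < 1)
    (hr : r < 2 * (1 - α) / (2 - α)) (hu : ‖u - 1‖ ≤ r / 2) (hv : ‖v‖ ≤ r / 2) :
    α < (1 + v / u).re := by
  have hrα : r * (2 - α) < 2 * (1 - α) := (lt_div_iff₀ (by linarith)).mp hr
  have hr0 : 0 ≤ r := by linarith [norm_nonneg (u - 1)]
  have hr2 : r < 2 := by nlinarith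
  have hu1 : 1 - r / 2 ≤ ‖u‖ := by
    have := norm_sub_norm_le 1 u
    rw [norm_one, norm_sub_rev] at this
    linarith
  have hvu : ‖v / u‖ ≤ (r / 2) / (1 - r / 2) := by
    rw [norm_div]
    exact div_le_div₀ (by linarith) hv (by linarith) hu1
  have hbound : (r / 2) / (1 - r / 2) < 1 - α := by
    rw [div_lt_iff₀ (by linarith)]
    linarith
  have hre := neg_le_of_abs_le (Complex.abs_re_le_norm (v / u))
  simp only [Complex.add_re, Complex.one_re]
  linarith

theorem stmt_15 (α : ℝ) (hα0 : 0 ≤ α) (hα1 : α < 1) (f : ℂ → ℂ) (hf : MemOmega 1 f)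
    (z : ℂ) (hz0 : 0 < ‖z‖) (hz : ‖z‖ < 2 * (1 - α) / (2 - α)) :
    f z ≠ 0 ∧ (z * deriv f z / f z).re > α := by
  obtain ⟨hA, hM⟩ := hf
  have hM' : ∀ w ∈ unitDisc, ‖w * deriv f w - f w‖ ≤ 1 / 2 := fun w hw => (hM w hw).le
  have hz_ne : z ≠ 0 := norm_pos_iff.mp hz0
  have hzD : z ∈ unitDisc :=
    mem_ball_zero_iff.mpr <| hz.trans_le <| (div_le_one (by linarith)).mpr (by linarith)
  have hf0 := hA.map_zero
  have hq' := norm_deriv_dslope_le hf0 hA.1 hM' hzD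
  have hq := norm_dslope_sub_deriv_le hf0 hA.1 hM' hzD
  rw [(hA.hasDerivAt_zero one_ne_zero).deriv, mul_comm, mul_one_div] at hq
  have hq0 : dslope f 0 z ≠ 0 := fun h => by
    rw [h, zero_sub, norm_neg, norm_one] at hq
    linarith [mem_ball_zero_iff.mp hzD]
  refine ⟨mul_dslope_of_map_zero hf0 z ▸ mul_ne_zero hz_ne hq0, ?_⟩
  rw [mul_deriv_div_eq_one_add_mul_deriv_dslope_div hf0 hz_ne hq0
    (differentiableAt_dslope_zero hA.1 hzD)]
  refine lt_re_one_add_div hα1 hz hq ?_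
  rw [norm_mul]
  linarith [mul_le_mul_of_nonneg_left hq' hz0.le]
end
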